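/- Let A ∈ ℝ^{m×n} have nonzero columns a_1,…,a_n and let S* = S*_A. Then the linear span of P_A equals the column space im(A_{S*}) of the submatrix A_{S*} formed by the columns of A indexed by S*, and P_A = P_{A_{S*}}. -/

import Mathlib

open Matrix Set MeasureTheory Pointwise ENNReal

noncomputable section

/-- Euclidean dot product on `Fin d → ℝ`. -/
def dotp {d : ℕ} (u v : Fin d → ℝ) : ℝ := ∑ i, u i * v i

/-- Euclidean norm on `Fin d → ℝ`. -/
def norm2 {d : ℕ} (v : Fin d → ℝ) : ℝ := Real.sqrt (∑ i, v i ^ 2)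

/-- Normalization `v / ‖v‖`, with the convention that `0` is mapped to `0`. -/
def nml {d : ℕ} (v : Fin d → ℝ) : Fin d → ℝ := (norm2 v)⁻¹ • v

/-- The `j`-th column of a matrix. -/
def mcol {d : ℕ} {ι : Type} (A : Matrix (Fin d) ι ℝ) (j : ι) : Fin d → ℝ := fun i => A i j

/-- Goffin's condition measure `ρ_A = max_{y ∈ im(A) \ {0}} min_j â_jᵀ ŷ`. -/
def goffin {d : ℕ} {ι : Type} [Fintype ι] (A : Matrix (Fin d) ι ℝ) : ℝ :=
  sSup { r : ℝ | ∃ y : Fin d → ℝ, (∃ x : ι → ℝ, A.mulVec x = y) ∧ y ≠ 0 ∧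
    r = ⨅ j : ι, dotp (nml (mcol A j)) (nml y) }

/-- The cone `Σ_A = {y : Aᵀ y ≥ 0}`. -/
def SigmaCone {d : ℕ} {ι : Type} (A : Matrix (Fin d) ι ℝ) : Set (Fin d → ℝ) :=
  { y | ∀ j, 0 ≤ dotp (mcol A j) y }

/-- `F_A = Σ_A ∩ B^d`. -/
def FA {d : ℕ} {ι : Type} (A : Matrix (Fin d) ι ℝ) : Set (Fin d → ℝ) :=
  SigmaCone A ∩ { z | norm2 z ≤ 1 }

/-- `‖v‖_M = √(vᵀ M v)`. -/
def qnorm {d : ℕ} (M : Matrix (Fin d) (Fin d) ℝ) (v : Fin d → ℝ) : ℝ :=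
  Real.sqrt (dotp v (M.mulVec v))

/-- The ellipsoid `E(M) = {z : ‖z‖_M ≤ 1}`. -/
def ell {d : ℕ} (M : Matrix (Fin d) (Fin d) ℝ) : Set (Fin d → ℝ) :=
  { z | qnorm M z ≤ 1 }

/-- The width of a set `X` along `a`: `sup {aᵀz : z ∈ X}`. -/
def widthOf {d : ℕ} (X : Set (Fin d → ℝ)) (a : Fin d → ℝ) : ℝ :=
  sSup { r : ℝ | ∃ z ∈ X, r = dotp a z }

/-- `P_A = conv(â_1,…,â_n) ∩ (−conv(â_1,…,â_n))`. -/
def PA {d : ℕ} {ι : Type} (A : Matrix (Fin d) ι ℝ) : Set (Fin d → ℝ) :=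
  convexHull ℝ (Set.range fun j => nml (mcol A j)) ∩
    (-(convexHull ℝ (Set.range fun j => nml (mcol A j))))

/-- `Δ_A`: maximum of `∏_{j ∈ B} ‖a_j‖` over sets `B` of linearly independent columns. -/
def DeltaA {d n : ℕ} (A : Matrix (Fin d) (Fin n) ℝ) : ℝ :=
  sSup { p : ℝ | ∃ B : Finset (Fin n),
    LinearIndependent ℝ (fun j : {x // x ∈ B} => mcol A j.1) ∧ p = ∏ j ∈ B, norm2 (mcol A j) }

/-- `T*_A`: indices `i` such that some `y` with `Aᵀy ≥ 0` has `a_iᵀ y > 0`. -/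
def TstarA {d : ℕ} {ι : Type} (A : Matrix (Fin d) ι ℝ) : Set ι :=
  { i | ∃ y : Fin d → ℝ, (∀ j, 0 ≤ dotp (mcol A j) y) ∧ 0 < dotp (mcol A i) y }

/-- `S*_A`: indices `i` such that some `x ≥ 0` with `Ax = 0` has `x_i > 0`. -/
def SstarA {d : ℕ} {ι : Type} [Fintype ι] (A : Matrix (Fin d) ι ℝ) : Set ι :=
  { i | ∃ x : ι → ℝ, (∀ j, 0 ≤ x j) ∧ A.mulVec x = 0 ∧ 0 < x i }

/-- `ω_A = min_{i ∈ T*_A} width_{F_A}(â_i)`. -/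
def omegaA {d : ℕ} {ι : Type} (A : Matrix (Fin d) ι ℝ) : ℝ :=
  sInf ((fun i => widthOf (FA A) (nml (mcol A i))) '' TstarA A)

/-!
Write `b_j = â_j`, a positive multiple of `a_j`. If `z` and `-z` both lie in `conv(b)`, with weights
`l` and `u`, then `∑ (l_j + u_j) b_j = 0` is a nonnegative dependency, so every index carrying weight
lies in `S*`; hence `P_A = P_{A_{S*}}` and `span P_A ⊆ im A_{S*}`. Conversely, a nonnegative
dependency `w` normalized to total weight one, with `w_i > 0`, puts `w_i b_i` into `P_A`: it lies
in `conv(b)`, which contains `0 = ∑ w_j b_j`, and `-w_i b_i = ∑_{j ≠ i} w_j b_j` has total weight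
at most one.
-/

theorem span_image_smul_eq {𝕜 E ι : Type*} [Field 𝕜] [AddCommGroup E] [Module 𝕜 E]
    {v : ι → E} {r : ι → 𝕜} (hr : ∀ j, r j ≠ 0) (s : Set ι) :
    Submodule.span 𝕜 ((fun j => r j • v j) '' s) = Submodule.span 𝕜 (v '' s) := by
  refine le_antisymm (Submodule.span_le.mpr ?_) (Submodule.span_le.mpr ?_) <;>
    rintro _ ⟨j, hj, rfl⟩
  · exact Submodule.smul_mem _ _ (Submodule.subset_span (mem_image_of_mem v hj))
  · simpa [smul_smul, inv_mul_cancel₀ (hr j)] using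
      Submodule.smul_mem _ (r j)⁻¹
        (Submodule.subset_span (mem_image_of_mem (fun j => r j • v j) hj))

section ConvexCombination

variable {𝕜 E ι : Type*} [Field 𝕜] [LinearOrder 𝕜] [IsStrictOrderedRing 𝕜]
  [AddCommGroup E] [Module 𝕜 E] [Fintype ι]

theorem convexHull_range_eq_image_stdSimplex (v : ι → E) :
    convexHull 𝕜 (range v) = Fintype.linearCombination 𝕜 v '' stdSimplex 𝕜 ι := by
  classical
  rw [← convexHull_rangle_single_eq_stdSimplex, LinearMap.image_convexHull, ← range_comp]
  congr 1
  ext i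
  simp [Fintype.linearCombination_apply_single]

theorem mem_convexHull_range_iff {v : ι → E} {x : E} :
    x ∈ convexHull 𝕜 (range v) ↔
      ∃ w : ι → 𝕜, (∀ j, 0 ≤ w j) ∧ ∑ j, w j = 1 ∧ ∑ j, w j • v j = x := by
  simp [convexHull_range_eq_image_stdSimplex, stdSimplex, Fintype.linearCombination_apply,
    and_assoc]

theorem sum_smul_mem_convexHull_image {v : ι → E} {s : Set ι} {w : ι → 𝕜}
    (hw₀ : ∀ j, 0 ≤ w j) (hw₁ : ∑ j, w j = 1) (hws : ∀ j, 0 < w j → j ∈ s) :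
    ∑ j, w j • v j ∈ convexHull 𝕜 (v '' s) := by
  classical
  set t := Finset.univ.filter fun k => 0 < w k
  have hzero : ∀ j ∉ t, w j = 0 := fun j hj =>
    le_antisymm (not_lt.mp (by simpa [t] using hj)) (hw₀ j)
  rw [← Finset.sum_subset (Finset.subset_univ t) fun j _ hj => by simp [hzero j hj]]
  refine (convex_convexHull 𝕜 _).sum_mem (fun j _ => hw₀ j) ?_ fun j hj =>
    subset_convexHull 𝕜 _ ⟨j, hws j (Finset.mem_filter.mp hj).2, rfl⟩
  rw [← hw₁]
  exact Finset.sum_subset (Finset.subset_univ t) fun j _ hj => hzero j hj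

theorem Convex.sum_mem_of_sum_le_one {C : Set E} (hC : Convex 𝕜 C) (h₀ : (0 : E) ∈ C)
    {w : ι → 𝕜} {p : ι → E} (hw₀ : ∀ j, 0 ≤ w j) (hw₁ : ∑ j, w j ≤ 1) (hp : ∀ j, p j ∈ C) :
    ∑ j, w j • p j ∈ C := by
  rcases (Finset.sum_nonneg fun j _ => hw₀ j).eq_or_lt with hW | hW
  · have hw : ∀ j, w j = 0 := fun j =>
      (Finset.sum_eq_zero_iff_of_nonneg fun j _ => hw₀ j).mp hW.symm j (Finset.mem_univ j)
    simpa [hw] using h₀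
  · have hmem : ∑ j, ((∑ k, w k)⁻¹ * w j) • p j ∈ C :=
      hC.sum_mem (fun j _ => mul_nonneg (inv_nonneg.mpr hW.le) (hw₀ j))
        (by rw [← Finset.mul_sum, inv_mul_cancel₀ hW.ne']) fun j _ => hp j
    convert hC.smul_mem_of_zero_mem h₀ hmem ⟨hW.le, hw₁⟩ using 1
    simp only [Finset.smul_sum, smul_smul, mul_inv_cancel_left₀ hW.ne']

end ConvexCombination

section NonnegDependency

variable (𝕜 : Type*) {E ι : Type*} [Field 𝕜] [LinearOrder 𝕜] [IsStrictOrderedRing 𝕜]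
  [AddCommGroup E] [Module 𝕜 E] [Fintype ι]

def nonnegDependencySupport (v : ι → E) : Set ι :=
  {i | ∃ c : ι → 𝕜, (∀ j, 0 ≤ c j) ∧ ∑ j, c j • v j = 0 ∧ 0 < c i}

def symmHull (s : Set E) : Set E :=
  convexHull 𝕜 s ∩ -convexHull 𝕜 s

variable {𝕜}

theorem nonnegDependencySupport_smul {v : ι → E} {r : ι → 𝕜} (hr : ∀ j, 0 < r j) :
    nonnegDependencySupport 𝕜 (fun j => r j • v j) = nonnegDependencySupport 𝕜 v := by
  ext i
  constructor
  · rintro ⟨c, hc₀, hc, hci⟩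
    refine ⟨fun j => c j * r j, fun j => mul_nonneg (hc₀ j) (hr j).le, ?_, mul_pos hci (hr i)⟩
    simpa only [mul_smul] using hc
  · rintro ⟨c, hc₀, hc, hci⟩
    refine ⟨fun j => c j * (r j)⁻¹, fun j => mul_nonneg (hc₀ j) (inv_nonneg.mpr (hr j).le), ?_,
      mul_pos hci (inv_pos.mpr (hr i))⟩
    simpa only [smul_smul, mul_assoc, inv_mul_cancel₀ (hr _).ne', mul_one] using hc

theorem mem_convexHull_image_nonnegDependencySupport {v : ι → E} {x : E}
    (hx : x ∈ convexHull 𝕜 (range v)) (hnx : -x ∈ convexHull 𝕜 (range v)) :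
    x ∈ convexHull 𝕜 (v '' nonnegDependencySupport 𝕜 v) := by
  obtain ⟨l, hl₀, hl₁, rfl⟩ := mem_convexHull_range_iff.mp hx
  obtain ⟨u, hu₀, -, hu⟩ := mem_convexHull_range_iff.mp hnx
  -- `l + u` is a nonnegative dependency, so it witnesses every index in the support of `l`
  have hdep : ∑ j, (l j + u j) • v j = 0 := by
    simp only [add_smul, Finset.sum_add_distrib, hu, add_neg_cancel]
  exact sum_smul_mem_convexHull_image hl₀ hl₁ fun j hj =>
    ⟨l + u, fun k => add_nonneg (hl₀ k) (hu₀ k), hdep, add_pos_of_pos_of_nonneg hj (hu₀ j)⟩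

theorem symmHull_range_eq_symmHull_image (v : ι → E) :
    symmHull 𝕜 (range v) = symmHull 𝕜 (v '' nonnegDependencySupport 𝕜 v) := by
  refine Subset.antisymm (fun x ⟨hx, hnx⟩ => ⟨?_, ?_⟩) ?_
  · exact mem_convexHull_image_nonnegDependencySupport hx hnx
  · exact mem_convexHull_image_nonnegDependencySupport hnx (by rwa [neg_neg])
  · have h := convexHull_mono (𝕜 := 𝕜) (image_subset_range v (nonnegDependencySupport 𝕜 v))
    exact inter_subset_inter h (neg_subset_neg.mpr h)

theorem exists_pos_smul_mem_symmHull {v : ι → E} {i : ι}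
    (hi : i ∈ nonnegDependencySupport 𝕜 v) :
    ∃ t : 𝕜, 0 < t ∧ t • v i ∈ symmHull 𝕜 (range v) := by
  classical
  obtain ⟨c, hc₀, hc, hci⟩ := hi
  have hC : 0 < ∑ j, c j :=
    hci.trans_le (Finset.single_le_sum (fun j _ => hc₀ j) (Finset.mem_univ i))
  set w : ι → 𝕜 := fun j => (∑ k, c k)⁻¹ * c j
  have hw₀ : ∀ j, 0 ≤ w j := fun j => mul_nonneg (inv_nonneg.mpr hC.le) (hc₀ j)
  have hw₁ : ∑ j, w j = 1 := by rw [← Finset.mul_sum, inv_mul_cancel₀ hC.ne']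
  have hw : ∑ j, w j • v j = 0 := by simp only [w, mul_smul, ← Finset.smul_sum, hc, smul_zero]
  have hconv := convex_convexHull 𝕜 (range v)
  have h₀ : (0 : E) ∈ convexHull 𝕜 (range v) :=
    hw ▸ mem_convexHull_range_iff.mpr ⟨w, hw₀, hw₁, rfl⟩
  have hv : ∀ j, v j ∈ convexHull 𝕜 (range v) := fun j =>
    subset_convexHull 𝕜 _ (mem_range_self j)
  have hwi : w i ≤ 1 := hw₁ ▸ Finset.single_le_sum (fun j _ => hw₀ j) (Finset.mem_univ i)
  refine ⟨w i, mul_pos (inv_pos.mpr hC) hci, hconv.smul_mem_of_zero_mem h₀ (hv i) ⟨hw₀ i, hwi⟩, ?_⟩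
  -- `-(w i • v i)` is the combination of the other `v j` with the weights `w j`, of total `1 - w i`
  set w' : ι → 𝕜 := w - Pi.single i (w i)
  have hw'₀ : ∀ j, 0 ≤ w' j := fun j => by
    rcases eq_or_ne j i with rfl | hj <;> simp [w', *]
  have hw'₁ : ∑ j, w' j ≤ 1 := by simp [w', Finset.sum_sub_distrib, hw₁, hw₀ i]
  have hneg : ∑ j, w' j • v j = -(w i • v i) := by
    simp [w', sub_smul, Finset.sum_sub_distrib, hw, Pi.single_apply, ite_smul]
  exact Set.mem_neg.mpr (hneg ▸ hconv.sum_mem_of_sum_le_one h₀ hw'₀ hw'₁ hv)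

theorem span_symmHull_range_eq (v : ι → E) :
    Submodule.span 𝕜 (symmHull 𝕜 (range v)) =
      Submodule.span 𝕜 (v '' nonnegDependencySupport 𝕜 v) := by
  refine le_antisymm (Submodule.span_le.mpr fun x hx => ?_) (Submodule.span_le.mpr ?_)
  · rw [symmHull_range_eq_symmHull_image] at hx
    exact convexHull_min Submodule.subset_span (Submodule.convex _) hx.1
  · rintro _ ⟨i, hi, rfl⟩
    obtain ⟨t, ht, hmem⟩ := exists_pos_smul_mem_symmHull hi
    simpa [smul_smul, inv_mul_cancel₀ ht.ne'] using
      Submodule.smul_mem _ t⁻¹ (Submodule.subset_span hmem)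

end NonnegDependency

lemma norm2_pos {d : ℕ} {v : Fin d → ℝ} (h : v ≠ 0) : 0 < norm2 v := by
  obtain ⟨i, hi⟩ : ∃ i, v i ≠ 0 := Function.ne_iff.mp h
  exact Real.sqrt_pos.mpr (Finset.sum_pos' (fun j _ => sq_nonneg _)
    ⟨i, Finset.mem_univ i, pow_two_pos_of_ne_zero hi⟩)

lemma exists_pos_smul_eq_nml {d : ℕ} (v : Fin d → ℝ) : ∃ r : ℝ, 0 < r ∧ nml v = r • v := by
  rcases eq_or_ne v 0 with rfl | hv
  · exact ⟨1, one_pos, by simp [nml]⟩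
  · exact ⟨(norm2 v)⁻¹, inv_pos.mpr (norm2_pos hv), rfl⟩

lemma SstarA_eq_nonnegDependencySupport {d : ℕ} {ι : Type} [Fintype ι]
    (A : Matrix (Fin d) ι ℝ) : SstarA A = nonnegDependencySupport ℝ (mcol A) := by
  have hmulVec : ∀ x, A *ᵥ x = ∑ j, x j • mcol A j := fun x => by
    ext k
    simp [Matrix.mulVec, dotProduct, mcol, mul_comm]
  simp only [SstarA, nonnegDependencySupport, hmulVec]

theorem span_PA_eq_and_PA_eq_general
    {m n : ℕ} (A : Matrix (Fin m) (Fin n) ℝ) :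
    (Submodule.span ℝ (PA A) = Submodule.span ℝ (mcol A '' SstarA A)) ∧
    PA A = convexHull ℝ ((fun j => nml (mcol A j)) '' SstarA A) ∩
      (-(convexHull ℝ ((fun j => nml (mcol A j)) '' SstarA A))) := by
  choose r hr_pos hr using fun j => exists_pos_smul_eq_nml (mcol A j)
  have hS : SstarA A = nonnegDependencySupport ℝ (fun j => nml (mcol A j)) := by
    simp only [hr, nonnegDependencySupport_smul hr_pos, SstarA_eq_nonnegDependencySupport]
  have hPA : PA A = symmHull ℝ (range fun j => nml (mcol A j)) := rfl
  refine ⟨?_, by rw [hPA, hS, symmHull_range_eq_symmHull_image]; rfl⟩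
  rw [hPA, span_symmHull_range_eq, ← hS]
  simp only [hr]
  exact span_image_smul_eq (fun j => (hr_pos j).ne') _

/-- Lemma 4.4: `span(P_A) = im(A_{S*})` (the span of the columns of `A` indexed by
`S* = S*_A`), and `P_A = P_{A_{S*}}`. -/
theorem span_PA_eq_and_PA_eq
    {m n : ℕ} (A : Matrix (Fin m) (Fin n) ℝ) (hcols : ∀ j, mcol A j ≠ 0) :
    (Submodule.span ℝ (PA A) = Submodule.span ℝ (mcol A '' SstarA A)) ∧
    PA A = convexHull ℝ ((fun j => nml (mcol A j)) '' SstarA A) ∩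
      (-(convexHull ℝ ((fun j => nml (mcol A j)) '' SstarA A))) :=
  span_PA_eq_and_PA_eq_general A
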